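/- Let Φ be a P×N real matrix with N < P such that ΦᵀΦ is invertible, let V be a P×(P−N) real matrix with ΦᵀV = 0 and VᵀV = I, let D_V be a (P−N)×(P−N) diagonal matrix, and let Ω and Z be N×N diagonal matrices. Define C = Φ·(ΦᵀΦ)⁻²·Φᵀ + V·D_V·Vᵀ, G = Φ·(ΦᵀΦ)⁻¹·2·Z·Ω·(ΦᵀΦ)⁻¹·Φᵀ, and B = Φ·(ΦᵀΦ)⁻¹·Ω²·(ΦᵀΦ)⁻¹·Φᵀ. Then Φᵀ·C·Φ = I, Φᵀ·G·Φ = 2·Z·Ω, and Φᵀ·B·Φ = Ω². -/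

import Mathlib

open Matrix

/-! Each of `G` and `B` is `Φ S⁻¹ M S⁻¹ Φᵀ` for the Gram matrix `S = ΦᵀΦ`, and so is the first
summand of `C` with `M = 1`; conjugating by `Φ` turns it into `S S⁻¹ M S⁻¹ S = M`. The second
summand `V D_V Vᵀ` of `C` is killed by `ΦᵀV = 0`. -/

namespace Matrix

variable {m n k R : Type*} [Fintype m] [CommRing R]

theorem transpose_mul_gram_inv_sandwich_mul [Fintype n] [DecidableEq n] {A : Matrix m n R}
    (hA : IsUnit (Aᵀ * A)) (M : Matrix n n R) :
    Aᵀ * (A * (Aᵀ * A)⁻¹ * M * (Aᵀ * A)⁻¹ * Aᵀ) * A = M := by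
  have hdet : IsUnit (Aᵀ * A).det := (isUnit_iff_isUnit_det _).mp hA
  calc Aᵀ * (A * (Aᵀ * A)⁻¹ * M * (Aᵀ * A)⁻¹ * Aᵀ) * A
      = (Aᵀ * A * (Aᵀ * A)⁻¹) * M * ((Aᵀ * A)⁻¹ * (Aᵀ * A)) := by simp only [Matrix.mul_assoc]
    _ = M := by rw [mul_nonsing_inv _ hdet, nonsing_inv_mul _ hdet, Matrix.one_mul, Matrix.mul_one]

theorem transpose_mul_conj_mul_eq_zero [Fintype k] {A : Matrix m n R} {V : Matrix m k R}
    (hAV : Aᵀ * V = 0) (D : Matrix k k R) :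
    Aᵀ * (V * D * Vᵀ) * A = 0 := by
  have hVA : Vᵀ * A = 0 := by simpa using congrArg transpose hAV
  simp only [Matrix.mul_assoc, hVA, Matrix.mul_zero]

end Matrix

theorem network_synthesis_more_transducers_general {P N : ℕ}
    (Φ : Matrix (Fin P) (Fin N) ℝ) (hΦ : IsUnit (Φᵀ * Φ))
    (V : Matrix (Fin P) (Fin (P - N)) ℝ)
    (hV1 : Φᵀ * V = 0)
    (DV : Matrix (Fin (P - N)) (Fin (P - N)) ℝ)
    (Ω Z : Matrix (Fin N) (Fin N) ℝ)
    (C G B : Matrix (Fin P) (Fin P) ℝ)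
    (hC : C = Φ * ((Φᵀ * Φ)⁻¹ * (Φᵀ * Φ)⁻¹) * Φᵀ + V * DV * Vᵀ)
    (hG : G = Φ * (Φᵀ * Φ)⁻¹ * ((2 : ℝ) • (Z * Ω)) * (Φᵀ * Φ)⁻¹ * Φᵀ)
    (hB : B = Φ * (Φᵀ * Φ)⁻¹ * Ω ^ 2 * (Φᵀ * Φ)⁻¹ * Φᵀ) :
    Φᵀ * C * Φ = 1 ∧
    Φᵀ * G * Φ = (2 : ℝ) • (Z * Ω) ∧
    Φᵀ * B * Φ = Ω ^ 2 := by
  have hC' :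
      C = Φ * (Φᵀ * Φ)⁻¹ * (1 : Matrix (Fin N) (Fin N) ℝ) * (Φᵀ * Φ)⁻¹ * Φᵀ + V * DV * Vᵀ := by
    rw [hC, Matrix.mul_one, ← Matrix.mul_assoc Φ]
  refine ⟨?_, ?_, ?_⟩
  · rw [hC', Matrix.mul_add, Matrix.add_mul, transpose_mul_gram_inv_sandwich_mul hΦ,
      transpose_mul_conj_mul_eq_zero hV1, add_zero]
  · rw [hG, transpose_mul_gram_inv_sandwich_mul hΦ]
  · rw [hB, transpose_mul_gram_inv_sandwich_mul hΦ]

/-- Network synthesis in the case `P > N_s`: with `Φ` of full column rank,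
`V` an orthonormal basis of the kernel of `Φᵀ`, and
`C = Φ(ΦᵀΦ)⁻²Φᵀ + V·D_V·Vᵀ`, `G = Φ(ΦᵀΦ)⁻¹·2ZΩ·(ΦᵀΦ)⁻¹Φᵀ`, `B = Φ(ΦᵀΦ)⁻¹Ω²(ΦᵀΦ)⁻¹Φᵀ`,
the modal relations `ΦᵀCΦ = I`, `ΦᵀGΦ = 2ZΩ` and `ΦᵀBΦ = Ω²` hold. -/
theorem network_synthesis_more_transducers {P N : ℕ} (hNP : N < P)
    (Φ : Matrix (Fin P) (Fin N) ℝ) (hΦ : IsUnit (Φᵀ * Φ))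
    (V : Matrix (Fin P) (Fin (P - N)) ℝ)
    (hV1 : Φᵀ * V = 0) (hV2 : Vᵀ * V = 1)
    (dV : Fin (P - N) → ℝ) (DV : Matrix (Fin (P - N)) (Fin (P - N)) ℝ)
    (hDV : DV = Matrix.diagonal dV)
    (ω ζ : Fin N → ℝ) (Ω Z : Matrix (Fin N) (Fin N) ℝ)
    (hΩ : Ω = Matrix.diagonal ω) (hZ : Z = Matrix.diagonal ζ)
    (C G B : Matrix (Fin P) (Fin P) ℝ)
    (hC : C = Φ * ((Φᵀ * Φ)⁻¹ * (Φᵀ * Φ)⁻¹) * Φᵀ + V * DV * Vᵀ)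
    (hG : G = Φ * (Φᵀ * Φ)⁻¹ * ((2 : ℝ) • (Z * Ω)) * (Φᵀ * Φ)⁻¹ * Φᵀ)
    (hB : B = Φ * (Φᵀ * Φ)⁻¹ * Ω ^ 2 * (Φᵀ * Φ)⁻¹ * Φᵀ) :
    Φᵀ * C * Φ = 1 ∧
    Φᵀ * G * Φ = (2 : ℝ) • (Z * Ω) ∧
    Φᵀ * B * Φ = Ω ^ 2 :=
  network_synthesis_more_transducers_general Φ hΦ V hV1 DV Ω Z C G B hC hG hB
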